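/- Let Φ_{μ₁,Σ₁} and Φ_{μ₂,Σ₂} be Gaussian densities on ℝ^D with invertible covariance matrices such that Σ₁⁻¹ − Σ₂⁻¹ is positive definite. Then for every x ∈ ℝ^D, Φ_{μ₁,Σ₁}(x)/Φ_{μ₂,Σ₂}(x) ≤ √(det Σ₂ / det Σ₁) · exp( (1/2) (μ₁ − μ₂)' (Σ₂ − Σ₁)⁻¹ (μ₁ − μ₂) ). -/

import Mathlib

open Real Matrix

/-- The `D`-dimensional Gaussian density with mean `m` and covariance `S`. -/
noncomputable def gaussianDensity {D : ℕ} (m : Fin D → ℝ) (S : Matrix (Fin D) (Fin D) ℝ)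
    (x : Fin D → ℝ) : ℝ :=
  (2 * π) ^ (-(D:ℝ)/2) * S.det ^ (-(1:ℝ)/2) *
    Real.exp (-(1/2) * ((x - m) ⬝ᵥ (S⁻¹ *ᵥ (x - m))))

/-!
The log-ratio of the two densities is `½ log (det S2 / det S1) + ½ (q₂ - q₁)`, where
`qᵢ = (x - μᵢ)' Sᵢ⁻¹ (x - μᵢ)`. With `y = x - μ₁`, `d = μ₁ - μ₂` and `Δ = S1⁻¹ - S2⁻¹`,
one has `q₁ - q₂ = y'Δy - 2 y'(S2⁻¹d) - d'S2⁻¹d`; completing the square in the positive definite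
`Δ` bounds this below by `-d'(S2⁻¹ + S2⁻¹Δ⁻¹S2⁻¹)d`, and
`S2⁻¹ + S2⁻¹Δ⁻¹S2⁻¹ = S2⁻¹Δ⁻¹S1⁻¹ = (S2 - S1)⁻¹`.
-/

namespace Matrix

variable {n : Type*} [Fintype n]

theorem IsSymm.dotProduct_mulVec_comm {R : Type*} [CommSemiring R] {M : Matrix n n R}
    (hM : M.IsSymm) (v w : n → R) : v ⬝ᵥ M *ᵥ w = w ⬝ᵥ M *ᵥ v := by
  rw [dotProduct_mulVec, ← mulVec_transpose, hM.eq, dotProduct_comm]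

variable [DecidableEq n]

theorem inv_sub_eq_mul_inv_sub_inv_mul {K : Type*} [CommRing K] {S₁ S₂ : Matrix n n K}
    (h₁ : IsUnit S₁.det) (h₂ : IsUnit S₂.det) (h : IsUnit (S₁⁻¹ - S₂⁻¹).det) :
    (S₂ - S₁)⁻¹ = S₂⁻¹ * (S₁⁻¹ - S₂⁻¹)⁻¹ * S₁⁻¹ := by
  refine inv_eq_left_inv ?_
  calc S₂⁻¹ * (S₁⁻¹ - S₂⁻¹)⁻¹ * S₁⁻¹ * (S₂ - S₁)
      = S₂⁻¹ * ((S₁⁻¹ - S₂⁻¹)⁻¹ * (S₁⁻¹ - S₂⁻¹)) * S₂ := by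
        simp only [Matrix.mul_sub, Matrix.sub_mul, Matrix.mul_assoc, nonsing_inv_mul _ h₁,
          nonsing_inv_mul _ h₂, Matrix.mul_one]
    _ = 1 := by rw [nonsing_inv_mul _ h, Matrix.mul_one, nonsing_inv_mul _ h₂]

theorem PosDef.neg_dotProduct_inv_mulVec_le {Δ : Matrix n n ℝ} (hΔ : Δ.PosDef) (y b : n → ℝ) :
    -(b ⬝ᵥ Δ⁻¹ *ᵥ b) ≤ y ⬝ᵥ Δ *ᵥ y - 2 * (y ⬝ᵥ b) := by
  have hΔb : Δ *ᵥ (Δ⁻¹ *ᵥ b) = b := by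
    rw [mulVec_mulVec, mul_nonsing_inv _ (isUnit_iff_ne_zero.mpr hΔ.det_pos.ne'), one_mulVec]
  have hsq : (y - Δ⁻¹ *ᵥ b) ⬝ᵥ Δ *ᵥ (y - Δ⁻¹ *ᵥ b)
      = y ⬝ᵥ Δ *ᵥ y - 2 * (y ⬝ᵥ b) + b ⬝ᵥ Δ⁻¹ *ᵥ b := by
    have hsymm : Δ.IsSymm := hΔ.isHermitian
    simp only [mulVec_sub, dotProduct_sub, sub_dotProduct, hΔb,
      hsymm.dotProduct_mulVec_comm (Δ⁻¹ *ᵥ b) y, dotProduct_comm (Δ⁻¹ *ᵥ b) b]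
    ring
  have hnonneg := hΔ.posSemidef.dotProduct_mulVec_nonneg (y - Δ⁻¹ *ᵥ b)
  rw [star_trivial] at hnonneg
  linarith

theorem PosDef.dotProduct_mulVec_sub_dotProduct_mulVec_le {A B : Matrix n n ℝ}
    (hAB : (A - B).PosDef) (hB : B.IsSymm) (x μ₁ μ₂ : n → ℝ) :
    (x - μ₂) ⬝ᵥ B *ᵥ (x - μ₂) - (x - μ₁) ⬝ᵥ A *ᵥ (x - μ₁) ≤
      (μ₁ - μ₂) ⬝ᵥ (B * (A - B)⁻¹ * A) *ᵥ (μ₁ - μ₂) := by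
  set d := μ₁ - μ₂
  set y := x - μ₁
  have hx : x - μ₂ = y + d := by simp [y, d]
  have hBCA : B * (A - B)⁻¹ * A = B + B * (A - B)⁻¹ * B := by
    calc B * (A - B)⁻¹ * A = B * (A - B)⁻¹ * (A - B) + B * (A - B)⁻¹ * B := by
          rw [← Matrix.mul_add, sub_add_cancel]
      _ = B + B * (A - B)⁻¹ * B := by
          rw [Matrix.mul_assoc B, nonsing_inv_mul _ (isUnit_iff_ne_zero.mpr hAB.det_pos.ne'),
            Matrix.mul_one]
  have hBd : d ⬝ᵥ (B * (A - B)⁻¹ * B) *ᵥ d = (B *ᵥ d) ⬝ᵥ (A - B)⁻¹ *ᵥ (B *ᵥ d) := by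
    rw [← mulVec_mulVec, ← mulVec_mulVec, hB.dotProduct_mulVec_comm, dotProduct_comm]
  have hsq := hAB.neg_dotProduct_inv_mulVec_le y (B *ᵥ d)
  rw [hx, hBCA, add_mulVec, dotProduct_add, hBd]
  simp only [sub_mulVec, mulVec_add, dotProduct_add, add_dotProduct, dotProduct_sub,
    hB.dotProduct_mulVec_comm d y] at hsq ⊢
  linarith

end Matrix

theorem gaussianDensity_div_gaussianDensity {D : ℕ} (μ₁ μ₂ : Fin D → ℝ)
    {S1 S2 : Matrix (Fin D) (Fin D) ℝ} (h₁ : 0 < S1.det) (h₂ : 0 < S2.det) (x : Fin D → ℝ) :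
    gaussianDensity μ₁ S1 x / gaussianDensity μ₂ S2 x =
      Real.sqrt (S2.det / S1.det) * Real.exp ((1/2) *
        ((x - μ₂) ⬝ᵥ S2⁻¹ *ᵥ (x - μ₂) - (x - μ₁) ⬝ᵥ S1⁻¹ *ᵥ (x - μ₁))) := by
  have hpow : ∀ {t : ℝ}, 0 < t → t ^ (-(1:ℝ)/2) = (Real.sqrt t)⁻¹ := fun ht => by
    rw [Real.sqrt_eq_rpow, ← Real.rpow_neg ht.le, neg_div]
  rw [gaussianDensity, gaussianDensity, hpow h₁, hpow h₂, Real.sqrt_div' _ h₁.le,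
    show ∀ q₁ q₂ : ℝ, (1/2) * (q₂ - q₁) = -(1/2) * q₁ - -(1/2) * q₂ from fun _ _ ↦ by ring,
    Real.exp_sub]
  field_simp

/-- If `S1⁻¹ − S2⁻¹` is positive definite, then for all `x`,
`Φ_{μ₁,S1}(x)/Φ_{μ₂,S2}(x) ≤ √(det S2/det S1) exp((1/2)(μ₁−μ₂)'(S2−S1)⁻¹(μ₁−μ₂))`. -/
theorem gaussian_ratio_bound {D : ℕ} (μ₁ μ₂ : Fin D → ℝ)
    (S1 S2 : Matrix (Fin D) (Fin D) ℝ)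
    (h₁ : S1.PosDef) (h₂ : S2.PosDef) (hdiff : (S1⁻¹ - S2⁻¹).PosDef)
    (x : Fin D → ℝ) :
    gaussianDensity μ₁ S1 x / gaussianDensity μ₂ S2 x ≤
      Real.sqrt (S2.det / S1.det) *
        Real.exp ((1/2) * ((μ₁ - μ₂) ⬝ᵥ ((S2 - S1)⁻¹ *ᵥ (μ₁ - μ₂)))) := by
  rw [gaussianDensity_div_gaussianDensity μ₁ μ₂ h₁.det_pos h₂.det_pos,
    inv_sub_eq_mul_inv_sub_inv_mul (isUnit_iff_ne_zero.mpr h₁.det_pos.ne')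
      (isUnit_iff_ne_zero.mpr h₂.det_pos.ne') (isUnit_iff_ne_zero.mpr hdiff.det_pos.ne')]
  gcongr
  exact hdiff.dotProduct_mulVec_sub_dotProduct_mulVec_le h₂.inv.isHermitian x μ₁ μ₂
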